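/- Let λ be an infinite regular cardinal and let X be a linearly ordered set of cardinality λ. Then X either has a subset order-isomorphic to λ (with its ordinal order) or order-isomorphic to the reverse order of λ, or it has a subset of order type ω that is λ-full in X on the right. -/

import Mathlib

universe u

open Set Cardinal

/-! Condense `X` by identifying `x` and `y` when fewer than `λ` points lie between them (an
equivalence relation, as `λ` is infinite). If some class has `λ` points, half of it, say the part
above a point `x₀`, has `λ` points; as each of them is preceded by fewer than `λ` points of that
half, regularity lets every smaller subset be bounded above within it, and a transfinite
recursion yields a copy of `λ` (or of its reverse). Otherwise there are `λ` classes, and a set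
`S` of representatives has `λ` points, any two of them with `λ` points in between. An increasing
`ω`-sequence in `S` is then `λ`-full on the right; if there is none, `S` is conversely
well-ordered and contains a reversed copy of `λ`. -/

/-- A subset `Y` of a linear order `X`, without a maximum, is `lam`-full in `X` on the right
if for every `y ∈ Y` the set `⋃ y' ∈ Y, (y, y')` (intervals computed in `X`)
has cardinality at least `lam`. -/
def FullRight {X : Type u} [LinearOrder X] (lam : Cardinal.{u}) (Y : Set X) : Prop :=
  (¬ ∃ m ∈ Y, ∀ y ∈ Y, y ≤ m) ∧
    ∀ y ∈ Y, lam ≤ #(⋃ y' ∈ Y, Ioo y y')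

section WellOrder

variable {α : Type u} [LinearOrder α] {lam : Cardinal.{u}}

theorem exists_strictMono_of_forall_mk_lt_exists_gt
    (H : ∀ s : Set α, #s < lam → ∃ y, ∀ x ∈ s, x < y) :
    ∃ f : lam.ord.ToType → α, StrictMono f := by
  have step : ∀ (a : lam.ord.ToType) (g : ∀ b, b < a → α), ∃ y, ∀ b (hb : b < a), g b hb < y :=
    fun a g ↦
      have ⟨y, hy⟩ := H (range fun b : Iio a ↦ g b.1 b.2)
        (mk_range_le.trans_lt (by simpa using mk_Iio_lt a))
      ⟨y, fun b hb ↦ hy _ ⟨⟨b, hb⟩, rfl⟩⟩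
  let F : lam.ord.ToType → α := WellFoundedLT.fix fun a g ↦ (step a g).choose
  refine ⟨F, fun b a hba ↦ ?_⟩
  rw [show F a = (step a fun c _ ↦ F c).choose from WellFoundedLT.fix_eq _ a]
  exact (step a fun c _ ↦ F c).choose_spec b hba

theorem exists_strictMono_of_le_mk [WellFoundedLT α] (h : lam ≤ #α) :
    ∃ f : lam.ord.ToType → α, StrictMono f := by
  have hle : lam.ord ≤ Ordinal.type (α := α) (· < ·) := by
    rwa [ord_le, Ordinal.card_type]
  rw [← Ordinal.type_toType lam.ord] at hle
  obtain ⟨e⟩ := Ordinal.type_le_iff'.1 hle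
  exact ⟨e, fun _ _ h ↦ e.map_rel_iff.2 h⟩

end WellOrder

theorem le_mk_quotient_of_forall_mk_lt {α : Type u} {lam : Cardinal.{u}} (s : Setoid α)
    (hlam : lam.IsRegular) (hα : lam ≤ #α) (h : ∀ x, #{y // s x y} < lam) :
    lam ≤ #(Quotient s) := by
  by_contra! hQ
  have hfiber (q : Quotient s) : #{x // Quotient.mk s x = q} < lam := by
    induction q using Quotient.inductionOn with | h x => ?_
    simpa only [Quotient.eq, Setoid.comm'] using h x
  refine (hα.trans_lt ?_).false
  rw [← mk_congr (Equiv.sigmaFiberEquiv (Quotient.mk s)), mk_sigma]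
  exact sum_lt_of_isRegular hlam hQ hfiber

section LinearOrder

open OrderDual

variable {X : Type u} [LinearOrder X] {lam : Cardinal.{u}}

theorem le_mk_Ioo_of_le_mk_Icc (hlam : ℵ₀ ≤ lam) {a b : X} (h : lam ≤ #(Icc a b)) :
    lam ≤ #(Ioo a b) := by
  by_contra! hlt
  refine (h.trans_lt ?_).false
  rw [← Icc_sdiff_both] at hlt
  exact (le_mk_sdiff_add_mk _ {a, b}).trans_lt
    (add_lt_of_lt hlam hlt ((toFinite _).lt_aleph0.trans_le hlam))

theorem fullRight_range_of_le_mk_Icc (hlam : ℵ₀ ≤ lam) {f : ℕ → X} (hf : StrictMono f)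
    (h : ∀ n, lam ≤ #(Icc (f n) (f (n + 1)))) : FullRight lam (range f) := by
  refine ⟨?_, ?_⟩
  · rintro ⟨_, ⟨n, rfl⟩, hmax⟩
    exact (hf n.lt_succ_self).not_ge (hmax _ ⟨n + 1, rfl⟩)
  · rintro _ ⟨n, rfl⟩
    exact (le_mk_Ioo_of_le_mk_Icc hlam (h n)).trans
      (mk_le_mk_of_subset (subset_biUnion_of_mem (mem_range_self (n + 1))))

theorem le_mk_inter_Iio_or_le_mk_inter_Ioi (hlam : ℵ₀ ≤ lam) {s : Set X} (hs : lam ≤ #s)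
    (x : X) : lam ≤ #(s ∩ Iio x : Set X) ∨ lam ≤ #(s ∩ Ioi x : Set X) := by
  by_contra! h
  have hcover : s ⊆ insert x ((s ∩ Iio x) ∪ (s ∩ Ioi x)) := fun y hy ↦ by
    rcases lt_trichotomy y x with hlt | rfl | hgt
    exacts [.inr (.inl ⟨hy, hlt⟩), .inl rfl, .inr (.inr ⟨hy, hgt⟩)]
  refine (hs.trans_lt ?_).false
  calc #s ≤ #(s ∩ Iio x : Set X) + #(s ∩ Ioi x : Set X) + 1 :=
        (mk_le_mk_of_subset hcover).trans
          (mk_insert_le.trans (add_le_add_left (mk_union_le _ _) _))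
    _ < lam := add_lt_of_lt hlam (add_lt_of_lt hlam h.1 h.2) (one_lt_aleph0.trans_le hlam)

variable (lam) in
def IsNear (x y : X) : Prop := #(uIcc x y) < lam

theorem isNear_comm {x y : X} : IsNear lam x y ↔ IsNear lam y x := by
  rw [IsNear, IsNear, uIcc_comm]

theorem IsNear.trans (hlam : ℵ₀ ≤ lam) {x y z : X} (hxy : IsNear lam x y)
    (hyz : IsNear lam y z) : IsNear lam x z :=
  (mk_le_mk_of_subset uIcc_subset_uIcc_union_uIcc).trans_lt
    ((mk_union_le _ _).trans_lt (add_lt_of_lt hlam hxy hyz))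

variable (lam) in
def nearSetoid (hlam : ℵ₀ ≤ lam) : Setoid X where
  r := IsNear lam
  iseqv := ⟨fun x ↦ by simpa [IsNear] using one_lt_aleph0.trans_le hlam, isNear_comm.1,
    IsNear.trans hlam⟩

theorem isNear_toDual {x y : X} : IsNear lam (toDual x) (toDual y) ↔ IsNear lam x y := by
  rw [IsNear, uIcc_toDual]
  rfl

theorem exists_strictMono_of_le_mk_isNear_inter_Ioi (hlam : lam.IsRegular) (x₀ : X)
    (h : lam ≤ #({y | IsNear lam x₀ y} ∩ Ioi x₀ : Set X)) :
    ∃ f : lam.ord.ToType → X, StrictMono f := by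
  set Y := {y | IsNear lam x₀ y} ∩ Ioi x₀
  suffices ∃ f : lam.ord.ToType → Y, StrictMono f from
    let ⟨f, hf⟩ := this; ⟨(↑) ∘ f, (Subtype.strictMono_coe _).comp hf⟩
  refine exists_strictMono_of_forall_mk_lt_exists_gt fun s hs ↦ ?_
  have hU : #(⋃ z ∈ s, Icc x₀ (z : X)) < lam :=
    (card_biUnion_lt_iff_forall_of_isRegular hlam hs).2 fun z _ ↦ by
      have hz : IsNear lam x₀ z := z.2.1
      rwa [IsNear, uIcc_of_le z.2.2.le] at hz
  obtain ⟨y, hyY, hyU⟩ := not_subset.1 fun hYU ↦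
    (h.trans_lt ((mk_le_mk_of_subset hYU).trans_lt hU)).false
  exact ⟨⟨y, hyY⟩, fun z hz ↦ not_le.1 fun hyz ↦
    hyU (mem_biUnion hz ⟨hyY.2.le, hyz⟩)⟩

theorem exists_strictAnti_of_le_mk_isNear_inter_Iio (hlam : lam.IsRegular) (x₀ : X)
    (h : lam ≤ #({y | IsNear lam x₀ y} ∩ Iio x₀ : Set X)) :
    ∃ f : lam.ord.ToType → X, StrictAnti f := by
  have hdual : {y : Xᵒᵈ | IsNear lam (toDual x₀) y} ∩ Ioi (toDual x₀) =
      ofDual ⁻¹' ({y | IsNear lam x₀ y} ∩ Iio x₀) := by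
    ext y
    exact and_congr isNear_toDual Iff.rfl
  obtain ⟨f, hf⟩ := exists_strictMono_of_le_mk_isNear_inter_Ioi hlam (toDual x₀) (hdual ▸ h)
  exact ⟨ofDual ∘ f, fun _ _ hab ↦ hf hab⟩

theorem exists_strictMono_or_strictAnti_of_le_mk_isNear (hlam : lam.IsRegular) (x₀ : X)
    (h : lam ≤ #{y // IsNear lam x₀ y}) :
    (∃ f : lam.ord.ToType → X, StrictMono f) ∨ ∃ f : lam.ord.ToType → X, StrictAnti f :=
  (le_mk_inter_Iio_or_le_mk_inter_Ioi hlam.aleph0_le h x₀).symm.imp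
    (exists_strictMono_of_le_mk_isNear_inter_Ioi hlam x₀)
    (exists_strictAnti_of_le_mk_isNear_inter_Iio hlam x₀)

theorem exists_pairwise_not_isNear (hlam : lam.IsRegular) (hX : lam ≤ #X)
    (h : ∀ x : X, #{y // IsNear lam x y} < lam) :
    ∃ S : Set X, lam ≤ #S ∧ S.Pairwise fun x y ↦ ¬IsNear lam x y := by
  let s := nearSetoid (X := X) lam hlam.aleph0_le
  refine ⟨range (Quotient.out : Quotient s → X), ?_, ?_⟩
  · rw [mk_range_eq _ Quotient.out_injective]
    exact le_mk_quotient_of_forall_mk_lt s hlam hX h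
  · rintro _ ⟨p, rfl⟩ _ ⟨q, rfl⟩ hpq hnear
    exact hpq (congrArg _ (Quotient.out_equiv_out.1 hnear))

theorem exists_strictAnti_or_fullRight_of_pairwise_not_isNear (hlam : ℵ₀ ≤ lam) {S : Set X}
    (hS : lam ≤ #S) (hfar : S.Pairwise fun x y ↦ ¬IsNear lam x y) :
    (∃ f : lam.ord.ToType → X, StrictAnti f) ∨
      ∃ f : ℕ → X, StrictMono f ∧ FullRight lam (range f) := by
  by_cases hmono : ∃ f : ℕ → S, StrictMono f
  · obtain ⟨f, hf⟩ := hmono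
    have hf' : StrictMono ((↑) ∘ f : ℕ → X) := hf
    refine .inr ⟨_, hf', fullRight_range_of_le_mk_Icc hlam hf' fun n ↦ ?_⟩
    have hfar_n : ¬IsNear lam (f n : X) (f (n + 1)) :=
      hfar (f n).2 (f (n + 1)).2 (hf'.injective.ne n.succ_ne_self.symm)
    rwa [IsNear, not_lt, uIcc_of_le (Subtype.coe_le_coe.2 (hf n.lt_succ_self).le)] at hfar_n
  · have : WellFoundedGT S := ⟨RelEmbedding.wellFounded_iff_isEmpty.2
      ⟨fun e ↦ hmono ⟨e, fun _ _ hab ↦ e.map_rel_iff.2 hab⟩⟩⟩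
    obtain ⟨f, hf⟩ := exists_strictMono_of_le_mk (α := Sᵒᵈ) hS
    exact .inl ⟨fun a ↦ ((ofDual (f a) : S) : X), fun _ _ hab ↦ hf hab⟩

end LinearOrder

/-- Every linear order of infinite regular cardinality `lam` has either a subset
order-isomorphic to `lam`, or a subset order-isomorphic to the reverse of `lam`, or a
subset of order type `ω` which is `lam`-full on the right. -/
theorem stmt0 (lam : Cardinal.{u}) (hlam : lam.IsRegular) (X : Type u) [LinearOrder X]
    (hcard : #X = lam) :
    (∃ f : lam.ord.ToType → X, StrictMono f) ∨
    (∃ f : lam.ord.ToType → X, StrictAnti f) ∨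
    (∃ f : ℕ → X, StrictMono f ∧ FullRight lam (Set.range f)) := by
  by_cases hbig : ∃ x₀ : X, lam ≤ #{y // IsNear lam x₀ y}
  · obtain ⟨x₀, hx₀⟩ := hbig
    exact (exists_strictMono_or_strictAnti_of_le_mk_isNear hlam x₀ hx₀).imp_right .inl
  · simp only [not_exists, not_le] at hbig
    obtain ⟨S, hS, hfar⟩ := exists_pairwise_not_isNear hlam hcard.ge hbig
    exact .inr (exists_strictAnti_or_fullRight_of_pairwise_not_isNear hlam.aleph0_le hS hfar)
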